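/- Define h_af : ℝ⁵ → ℝ by h_af(x, z, p₁, p₂, q₂) = 300·x·p₁ + (1−x)·(100·(1/2 − q₂) + (1/2)·(100·z·(1−p₂) + 100·(1−z)·q₂)). Then the supremum over (x, z) ∈ [0,1] × [0,1] of the infimum over (p₁, p₂, q₂) ∈ [1/10, 2/5]³ of h_af(x, z, p₁, p₂, q₂) equals 40. -/
import Mathlib


noncomputable def hAf (x z p₁ p₂ q₂ : ℝ) : ℝ :=
  300 * x * p₁ + (1 - x) * (100 * (1/2 - q₂)
    + (1/2) * (100 * z * (1 - p₂) + 100 * (1 - z) * q₂))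

lemma inner_inf (x z : ℝ) (hx : x ∈ Set.Icc (0:ℝ) 1) (hz : z ∈ Set.Icc (0:ℝ) 1) :
    sInf {w : ℝ | ∃ p₁ ∈ Set.Icc (1/10 : ℝ) (2/5), ∃ p₂ ∈ Set.Icc (1/10 : ℝ) (2/5),
          ∃ q₂ ∈ Set.Icc (1/10 : ℝ) (2/5), w = hAf x z p₁ p₂ q₂}
      = 30 * x + (1 - x) * (30 + 10 * z) := by
  obtain ⟨hx0, hx1⟩ := hx
  obtain ⟨hz0, hz1⟩ := hz
  apply le_antisymm
  · apply csInf_le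
    · refine ⟨-1000, ?_⟩
      rintro w ⟨p₁, ⟨hp1a, hp1b⟩, p₂, ⟨hp2a, hp2b⟩, q₂, ⟨hq2a, hq2b⟩, rfl⟩
      simp only [hAf]
      have hB : (0:ℝ) ≤ 100 * (1/2 - q₂) + 1/2 * (100 * z * (1 - p₂) + 100 * (1 - z) * q₂) := by
        nlinarith [mul_nonneg hz0 (by linarith : (0:ℝ) ≤ 1 - p₂),
          mul_nonneg (by linarith : (0:ℝ) ≤ 1 - z) (by linarith : (0:ℝ) ≤ q₂)]
      nlinarith [mul_nonneg hx0 (by linarith : (0:ℝ) ≤ p₁),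
        mul_nonneg (by linarith : (0:ℝ) ≤ 1 - x) hB]
    · refine ⟨1/10, ⟨le_refl _, by norm_num⟩, 2/5, ⟨by norm_num, le_refl _⟩,
        2/5, ⟨by norm_num, le_refl _⟩, ?_⟩
      simp only [hAf]; ring
  · apply le_csInf
    · exact ⟨_, 1/10, ⟨le_refl _, by norm_num⟩, 2/5, ⟨by norm_num, le_refl _⟩,
        2/5, ⟨by norm_num, le_refl _⟩, rfl⟩
    · rintro w ⟨p₁, ⟨hp1a, hp1b⟩, p₂, ⟨hp2a, hp2b⟩, q₂, ⟨hq2a, hq2b⟩, rfl⟩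
      simp only [hAf]
      nlinarith [mul_nonneg hx0 (sub_nonneg.2 (show (1/10:ℝ) ≤ p₁ from hp1a)),
        mul_nonneg (mul_nonneg (sub_nonneg.2 hx1) hz0) (sub_nonneg.2 hp2b),
        mul_nonneg (mul_nonneg (sub_nonneg.2 hx1) (by linarith : (0:ℝ) ≤ 1 + z)) (sub_nonneg.2 hq2b)]

theorem agentFirst_aRect_optimal_value :
    sSup {v : ℝ | ∃ x ∈ Set.Icc (0 : ℝ) 1, ∃ z ∈ Set.Icc (0 : ℝ) 1,
        v = sInf {w : ℝ | ∃ p₁ ∈ Set.Icc (1/10 : ℝ) (2/5), ∃ p₂ ∈ Set.Icc (1/10 : ℝ) (2/5),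
          ∃ q₂ ∈ Set.Icc (1/10 : ℝ) (2/5), w = hAf x z p₁ p₂ q₂}} = 40 := by
  apply le_antisymm
  · apply csSup_le
    · refine ⟨_, 0, ⟨le_refl _, zero_le_one⟩, 1, ⟨zero_le_one, le_refl _⟩, rfl⟩
    · rintro v ⟨x, hx, z, hz, rfl⟩
      rw [inner_inf x z hx hz]
      obtain ⟨hx0, hx1⟩ := hx
      obtain ⟨hz0, hz1⟩ := hz
      nlinarith [mul_nonneg hx0 (sub_nonneg.2 hz1)]
  · apply le_csSup
    · refine ⟨40, ?_⟩
      rintro v ⟨x, hx, z, hz, rfl⟩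
      rw [inner_inf x z hx hz]
      obtain ⟨hx0, hx1⟩ := hx
      obtain ⟨hz0, hz1⟩ := hz
      nlinarith [mul_nonneg hx0 (sub_nonneg.2 hz1)]
    · refine ⟨0, ⟨le_refl _, zero_le_one⟩, 1, ⟨zero_le_one, le_refl _⟩, ?_⟩
      rw [inner_inf 0 1 ⟨le_refl _, zero_le_one⟩ ⟨zero_le_one, le_refl _⟩]
      norm_num
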